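/- Let n ≥ 2, let F be the n×n matrix with F_{i,i+1} = 1 for i = 1,…,n−1 and all other entries 0, and let D be an n×n diagonal matrix with diagonal vector d := D𝟏 and d_av := 𝟏^T d / n. For a permutation matrix P write D_P := P^T D P. Then the average over all n! permutation matrices P satisfies (1/n!)·∑_{P} P (I − 𝟏 e₁^T)(−2 D_P + D_P F + F^T D_P)(I − e₁ 𝟏^T) P^T = −2·(1 + 1/n)·D + ((3n−2)/(n(n−1)))·( d 𝟏^T + 𝟏 d^T ) − 2·(n/(n−1))·d_av·𝟏𝟏^T. -/

import Mathlib

open Matrix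

/-- The matrix with ones on the superdiagonal. -/
def matF (n : ℕ) : Matrix (Fin n) (Fin n) ℝ :=
  Matrix.of fun i j => if (i : ℕ) + 1 = (j : ℕ) then 1 else 0

/-- The permutation matrix `P` of `σ`, satisfying `P e_j = e_{σ j}`. -/
def permMat {n : ℕ} (σ : Equiv.Perm (Fin n)) : Matrix (Fin n) (Fin n) ℝ :=
  Matrix.of fun i j => if i = σ j then 1 else 0

/-!
Conjugation by `P` turns `D_P` back into `D`, the matrix `F` into `P F Pᵀ`, whose `(i, j)` entry is
`[σ⁻¹ i + 1 = σ⁻¹ j]`, and the projection `I - 𝟏 e₁ᵀ` into `I - 𝟏 e_{σ 0}ᵀ`. So every entry of a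
summand is a combination of `d i`, `d j` and `d (σ 0)` whose weights depend on `σ` only through one
value, or a pair of values at distinct points, of `σ` or `σ⁻¹`. Over a uniformly random permutation
such a value is uniform on points and such a pair uniform on ordered pairs of distinct points, because
precomposing with a transposition does not change the average.
-/

open Finset Equiv

section PermSums

variable {α M : Type*} [Fintype α] [DecidableEq α] [AddCommMonoid M] [IsAddTorsionFree M]

theorem sum_perm_apply (f : α → M) (x : α) :
    ∑ σ : Perm α, f (σ x) = (Fintype.card α - 1).factorial • ∑ a, f a := by
  have hswap (y : α) : ∑ σ : Perm α, f (σ y) = ∑ σ : Perm α, f (σ x) := by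
    rw [← Equiv.sum_comp (Equiv.mulRight (swap y x))]
    simp
  have hcard : Fintype.card α ≠ 0 := (Fintype.card_pos_iff.2 ⟨x⟩).ne'
  refine nsmul_right_injective hcard ?_
  calc Fintype.card α • ∑ σ : Perm α, f (σ x) = ∑ y : α, ∑ σ : Perm α, f (σ y) := by
        rw [sum_congr rfl fun y _ => hswap y, sum_const, card_univ]
    _ = ∑ σ : Perm α, ∑ a, f a := by
        rw [sum_comm]
        exact sum_congr rfl fun σ _ => Equiv.sum_comp σ f
    _ = Fintype.card α • (Fintype.card α - 1).factorial • ∑ a, f a := by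
        rw [sum_const, card_univ, Fintype.card_perm, smul_smul, Nat.mul_factorial_pred hcard]

theorem sum_perm_apply_apply (g : α → α → M) {x y : α} (hxy : x ≠ y) :
    ∑ σ : Perm α, g (σ x) (σ y)
      = (Fintype.card α - 2).factorial • ∑ a, ∑ b ∈ univ.erase a, g a b := by
  have hswap {z : α} (hz : z ≠ x) :
      ∑ σ : Perm α, g (σ x) (σ z) = ∑ σ : Perm α, g (σ x) (σ y) := by
    rw [← Equiv.sum_comp (Equiv.mulRight (swap z y))]
    simp [swap_apply_of_ne_of_ne hz.symm hxy]
  have hcard : Fintype.card α - 1 ≠ 0 := by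
    have := Fintype.one_lt_card_iff_nontrivial.2 ⟨x, y, hxy⟩
    omega
  refine nsmul_right_injective hcard ?_
  calc (Fintype.card α - 1) • ∑ σ : Perm α, g (σ x) (σ y)
        = ∑ z ∈ univ.erase x, ∑ σ : Perm α, g (σ x) (σ z) := by
        rw [sum_congr rfl fun z hz => hswap (ne_of_mem_erase hz), sum_const,
          card_erase_of_mem (mem_univ x), card_univ]
    _ = ∑ σ : Perm α, ∑ b ∈ univ.erase (σ x), g (σ x) b := by
        rw [sum_comm]
        exact sum_congr rfl fun σ _ => sum_equiv σ (by simp) fun _ _ => rfl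
    _ = (Fintype.card α - 1) • (Fintype.card α - 2).factorial
          • ∑ a, ∑ b ∈ univ.erase a, g a b := by
        rw [sum_perm_apply (fun a => ∑ b ∈ univ.erase a, g a b), smul_smul,
          show Fintype.card α - 1 = Fintype.card α - 2 + 1 by omega, Nat.factorial_succ]

theorem sum_perm_ite_eq_apply (f : α → M) (x i : α) :
    ∑ σ : Perm α, (if i = σ x then f (σ x) else 0) = (Fintype.card α - 1).factorial • f i := by
  rw [sum_perm_apply (fun a => if i = a then f a else 0), sum_ite_eq, if_pos (mem_univ i)]

end PermSums

theorem sum_perm_ite_eq_apply_apply {α M : Type*} [Fintype α] [DecidableEq α] [AddCommGroup M]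
    [IsAddTorsionFree M] (f : α → M) {x y : α} (hxy : x ≠ y) (i : α) :
    ∑ σ : Perm α, (if i = σ y then f (σ x) else 0)
      = (Fintype.card α - 2).factorial • (∑ a, f a - f i) := by
  rw [sum_perm_apply_apply (fun a b => if i = b then f a else 0) hxy]
  simp only [sum_ite_eq, mem_erase, mem_univ, and_true]
  rw [← sum_filter, filter_ne, sum_erase_eq_sub (mem_univ i)]

section PermMat

variable {n : ℕ} {ι : Type*}

theorem permMat_mul (σ : Perm (Fin n)) (X : Matrix (Fin n) ι ℝ) :
    permMat σ * X = X.submatrix ⇑σ⁻¹ id := by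
  ext i j
  simp [permMat, mul_apply, ← Equiv.symm_apply_eq]

theorem transpose_permMat_mul (σ : Perm (Fin n)) (X : Matrix (Fin n) ι ℝ) :
    (permMat σ)ᵀ * X = X.submatrix σ id := by
  ext i j
  simp [permMat, mul_apply]

theorem mul_transpose_permMat (σ : Perm (Fin n)) (X : Matrix ι (Fin n) ℝ) :
    X * (permMat σ)ᵀ = X.submatrix id ⇑σ⁻¹ := by
  rw [← transpose_transpose (X * _), transpose_mul, transpose_transpose, permMat_mul]
  rfl

theorem mul_permMat (σ : Perm (Fin n)) (X : Matrix ι (Fin n) ℝ) :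
    X * permMat σ = X.submatrix id σ := by
  rw [← transpose_transpose (X * _), transpose_mul, transpose_permMat_mul]
  rfl

theorem permMat_mul_mul_transpose_apply (σ : Perm (Fin n)) (X : Matrix (Fin n) (Fin n) ℝ)
    (i j : Fin n) : (permMat σ * X * (permMat σ)ᵀ) i j = X (σ⁻¹ i) (σ⁻¹ j) := by
  rw [permMat_mul, mul_transpose_permMat]
  rfl

theorem transpose_permMat_mul_diagonal_mul_permMat (σ : Perm (Fin n)) (d : Fin n → ℝ) :
    (permMat σ)ᵀ * diagonal d * permMat σ = diagonal (d ∘ σ) := by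
  rw [transpose_permMat_mul, mul_permMat, submatrix_submatrix, Function.id_comp,
    Function.comp_id, submatrix_diagonal_equiv]

end PermMat

theorem one_sub_vecMulVec_mul_mul_one_sub_vecMulVec_apply {ι R : Type*} [Fintype ι]
    [DecidableEq ι] [Ring R] (z : ι) (X : Matrix ι ι R) (k l : ι) :
    (((1 : Matrix ι ι R) - vecMulVec (fun _ => 1) (Pi.single z 1)) * X
      * (1 - vecMulVec (Pi.single z 1) (fun _ => 1)) : Matrix ι ι R) k l
      = X k l - X z l - X k z + X z z := by
  simp only [Matrix.sub_mul, Matrix.mul_sub, Matrix.one_mul, Matrix.mul_one, Matrix.sub_apply]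
  simp [mul_apply, vecMulVec_apply, Pi.single_apply]
  abel

theorem matF_apply_self (n : ℕ) (k : Fin n) : matF n k k = 0 := by
  simp [matF]

theorem matF_apply_zero (m : ℕ) (k : Fin (m + 2)) : matF (m + 2) k 0 = 0 := by
  simp [matF]

theorem matF_zero_apply (m : ℕ) (l : Fin (m + 2)) :
    matF (m + 2) 0 l = if l = 1 then 1 else 0 := by
  simp [matF, Fin.ext_iff, eq_comm]

theorem sum_sum_matF (n : ℕ) : ∑ a, ∑ b, matF (n + 1) a b = n := by
  have hrow (k : Fin n) : ∑ b, matF (n + 1) k.castSucc b = 1 := by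
    rw [sum_eq_single k.succ] <;> simp [matF, Fin.ext_iff]
    omega
  have hlast : ∑ b, matF (n + 1) (Fin.last n) b = 0 :=
    sum_eq_zero fun b _ => by simp [matF]; omega
  rw [Fin.sum_univ_castSucc]
  simp [hrow, hlast]

theorem sum_perm_matF_inv_apply {m : ℕ} (i j : Fin (m + 2)) :
    ∑ σ : Perm (Fin (m + 2)), matF (m + 2) (σ⁻¹ i) (σ⁻¹ j)
      = if i = j then 0 else ((m + 1).factorial : ℝ) := by
  rw [← Equiv.sum_comp (Equiv.inv (Perm (Fin (m + 2))))]
  simp only [Equiv.inv_apply, inv_inv]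
  split_ifs with hij
  · simp [hij, matF_apply_self]
  · rw [sum_perm_apply_apply (fun a b => matF (m + 2) a b) hij]
    simp [sum_erase _ (matF_apply_self _ _), sum_sum_matF, Nat.factorial_succ]
    ring

theorem Oeps_summand_apply {m : ℕ} (σ : Perm (Fin (m + 2))) (d : Fin (m + 2) → ℝ)
    (i j : Fin (m + 2)) :
    (permMat σ * ((1 : Matrix (Fin (m + 2)) (Fin (m + 2)) ℝ)
        - vecMulVec (fun _ => 1) (Pi.single 0 1))
      * ((-2 : ℝ) • ((permMat σ)ᵀ * diagonal d * permMat σ)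
        + ((permMat σ)ᵀ * diagonal d * permMat σ) * matF (m + 2)
        + (matF (m + 2))ᵀ * ((permMat σ)ᵀ * diagonal d * permMat σ))
      * (1 - vecMulVec (Pi.single 0 1) (fun _ => 1)) * (permMat σ)ᵀ
        : Matrix (Fin (m + 2)) (Fin (m + 2)) ℝ) i j
      = -2 * diagonal d i j
        + d i * matF (m + 2) (σ⁻¹ i) (σ⁻¹ j) + d j * matF (m + 2) (σ⁻¹ j) (σ⁻¹ i)
        + 2 * (if i = σ 0 then d (σ 0) else 0) + 2 * (if j = σ 0 then d (σ 0) else 0)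
        - (if i = σ 1 then d (σ 0) else 0) - (if j = σ 1 then d (σ 0) else 0)
        - 2 * d (σ 0) := by
  rw [Matrix.mul_assoc (permMat σ * _), Matrix.mul_assoc (permMat σ),
    ← Matrix.mul_assoc _ _ (1 - _), permMat_mul_mul_transpose_apply,
    one_sub_vecMulVec_mul_mul_one_sub_vecMulVec_apply,
    transpose_permMat_mul_diagonal_mul_permMat]
  have hinv (x y : Fin (m + 2)) : x = σ.symm y ↔ y = σ x := by
    rw [Equiv.eq_symm_apply, eq_comm]
  rcases eq_or_ne i j with rfl | hij
  · simp +contextual [matF_apply_zero, matF_zero_apply, diagonal_apply, Equiv.symm_apply_eq, hinv]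
    ring
  · simp +contextual [matF_apply_zero, matF_zero_apply, diagonal_apply, Equiv.symm_apply_eq, hinv,
      hij, hij.symm]
    ring

theorem average_Oeps_term (n : ℕ) (hn : 2 ≤ n) (d : Fin n → ℝ)
    (dav : ℝ) (hdav : dav = (∑ i, d i) / n) :
    ((n.factorial : ℝ))⁻¹ •
        ∑ σ : Equiv.Perm (Fin n),
          permMat σ *
            ((1 : Matrix (Fin n) (Fin n) ℝ)
              - Matrix.vecMulVec (fun _ => 1) (Pi.single (⟨0, by omega⟩ : Fin n) 1)) *
            ((-2 : ℝ) • ((permMat σ)ᵀ * Matrix.diagonal d * permMat σ)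
              + ((permMat σ)ᵀ * Matrix.diagonal d * permMat σ) * matF n
              + (matF n)ᵀ * ((permMat σ)ᵀ * Matrix.diagonal d * permMat σ)) *
            ((1 : Matrix (Fin n) (Fin n) ℝ)
              - Matrix.vecMulVec (Pi.single (⟨0, by omega⟩ : Fin n) 1) (fun _ => 1)) *
            (permMat σ)ᵀ
      = (-2 * (1 + 1 / (n : ℝ))) • Matrix.diagonal d
        + ((3 * (n : ℝ) - 2) / ((n : ℝ) * ((n : ℝ) - 1))) •
            (Matrix.vecMulVec d (fun _ => 1) + Matrix.vecMulVec (fun _ => 1) d)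
        - (2 * ((n : ℝ) / ((n : ℝ) - 1)) * dav) •
            Matrix.vecMulVec (fun _ => 1) (fun _ => 1) := by
  obtain ⟨m, rfl⟩ : ∃ m, n = m + 2 := ⟨n - 2, by omega⟩
  ext i j
  simp only [Fin.zero_eta, Matrix.smul_apply, Matrix.sum_apply, Oeps_summand_apply,
    sum_add_distrib, sum_sub_distrib, ← mul_sum, sum_const, card_univ, Fintype.card_perm,
    Fintype.card_fin, sum_perm_matF_inv_apply, sum_perm_ite_eq_apply, sum_perm_apply d 0,
    sum_perm_ite_eq_apply_apply _ (zero_ne_one' (Fin (m + 2)))]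
  simp only [Matrix.add_apply, Matrix.sub_apply, Matrix.smul_apply, vecMulVec_apply,
    diagonal_apply, nsmul_eq_mul, smul_eq_mul, Nat.add_sub_cancel, Nat.reduceSubDiff,
    Nat.factorial_succ (m + 1), Nat.factorial_succ m, hdav]
  push_cast
  rw [show (m : ℝ) + 2 - 1 = m + 1 by ring]
  rcases eq_or_ne i j with rfl | hij
  · simp only [if_true]
    field_simp
    ring
  · simp only [hij, hij.symm, if_false]
    field_simp
    ring
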